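/- Let (A, R) be a crystallographic arrangement. For each chamber K let ρ^K = (1/2)∑_{α ∈ R_+^K} α, where R_+^K = R ∩ ∑_{α∈B^K} ℝ_{≥0} α. Then for any two chambers K and K', the point ρ^K lies in the cone S^{K'} = ρ^{K'} − ∑_{α∈B^{K'}} ℝ_{≥0} α; consequently the set {ρ^K : K a chamber} is the vertex set of the convex polytope P = ⋂_K S^K, and P is an integral polytope in (1/2)M where M = ∑_{α∈R} ℤα. -/

import Mathlib

open scoped Classical Pointwise BigOperators

noncomputable section

abbrev Vr (r : ℕ) : Type := Fin r → ℝ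

/-- The convex cone generated by a finite set of vectors. -/
def coneGen {M : Type*} [AddCommGroup M] [Module ℝ M] (s : Finset M) : Set M :=
  { x | ∃ c : M → ℝ, (∀ v, 0 ≤ c v) ∧ x = ∑ v ∈ s, c v • v }

/-- Dimension of the linear span of a set. -/
def spanDim {M : Type*} [AddCommGroup M] [Module ℝ M] (s : Set M) : ℕ :=
  Module.finrank ℝ (Submodule.span ℝ s)

/-- A (linear) hyperplane: the kernel of a nonzero linear functional. -/
def IsHyp {M : Type*} [AddCommGroup M] [Module ℝ M] (H : Set M) : Prop :=
  ∃ f : M →ₗ[ℝ] ℝ, f ≠ 0 ∧ H = {x | f x = 0}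

/-- A strongly convex rational polyhedral cone with respect to the lattice `N`. -/
def IsNCone {r : ℕ} (N : AddSubgroup (Vr r)) (σ : Set (Vr r)) : Prop :=
  ∃ s : Finset (Vr r), ↑s ⊆ (N : Set (Vr r)) ∧ σ = coneGen s ∧ σ ∩ (-σ) ⊆ {0}

/-- `τ` is a face of `σ`. -/
def IsFaceOf {M : Type*} [AddCommGroup M] [Module ℝ M] (τ σ : Set M) : Prop :=
  ∃ m : M →ₗ[ℝ] ℝ, (∀ x ∈ σ, 0 ≤ m x) ∧ τ = σ ∩ {x | m x = 0}

/-- A fan in the lattice `N`. -/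
structure IsFan {r : ℕ} (N : AddSubgroup (Vr r)) (F : Set (Set (Vr r))) : Prop where
  finite : F.Finite
  nonempty : F.Nonempty
  cones : ∀ σ ∈ F, IsNCone N σ
  faces : ∀ σ ∈ F, ∀ τ : Set (Vr r), IsFaceOf τ σ → τ ∈ F
  inter : ∀ σ₁ ∈ F, ∀ σ₂ ∈ F, IsFaceOf (σ₁ ∩ σ₂) σ₁ ∧ IsFaceOf (σ₁ ∩ σ₂) σ₂

/-- Completeness: the support is everything. -/
def FanComplete {M : Type*} (F : Set (Set M)) : Prop := ⋃₀ F = Set.univ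

/-- Strong symmetry: complete, and the support of the codimension-one cones is a
finite union of hyperplanes. -/
def SSymm {M : Type*} [AddCommGroup M] [Module ℝ M] (F : Set (Set M)) : Prop :=
  FanComplete F ∧ ∃ Hs : Finset (Set M), (∀ h ∈ Hs, IsHyp h) ∧
    ⋃₀ {τ ∈ F | spanDim τ = Module.finrank ℝ M - 1} = ⋃₀ ↑Hs

/-- Central symmetry. -/
def CSymm {M : Type*} [AddCommGroup M] (F : Set (Set M)) : Prop := ∀ σ ∈ F, -σ ∈ F

/-- `b` is a ℤ-basis of the subgroup `L` of `ℝ^r`. -/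
def IsZBasis {r d : ℕ} (L : AddSubgroup (Vr r)) (b : Fin d → Vr r) : Prop :=
  LinearIndependent ℝ b ∧ AddSubgroup.closure (Set.range b) = L

/-- A (full-rank) lattice in `ℝ^r`. -/
def IsLattice {r : ℕ} (N : AddSubgroup (Vr r)) : Prop :=
  ∃ b : Fin r → Vr r, IsZBasis N b

/-- A cone generated by a part of a ℤ-basis of `L`. -/
def SmoothCone {r : ℕ} (L : AddSubgroup (Vr r)) (σ : Set (Vr r)) : Prop :=
  ∃ (d : ℕ) (b : Fin d → Vr r) (s : Finset (Fin d)),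
    IsZBasis L b ∧ σ = coneGen (s.image b)

/-- Chambers of an arrangement: connected components of the complement. -/
def chambers {r : ℕ} (A : Finset (Set (Vr r))) : Set (Set (Vr r)) :=
  { K | ∃ x ∈ (⋃₀ (A : Set (Set (Vr r))))ᶜ,
      K = connectedComponentIn (⋃₀ (A : Set (Set (Vr r))))ᶜ x }

/-- An open simplicial cone of full dimension. -/
def IsOpenSimplicialCone {r : ℕ} (K : Set (Vr r)) : Prop :=
  ∃ b : Fin r → Vr r, LinearIndependent ℝ b ∧
    K = { x | ∃ c : Fin r → ℝ, (∀ i, 0 < c i) ∧ x = ∑ i, c i • b i }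

def ker0 {r : ℕ} (α : Vr r →ₗ[ℝ] ℝ) : Set (Vr r) := {x | α x = 0}

/-- Walls of a chamber `K`. -/
def walls {r : ℕ} (A : Finset (Set (Vr r))) (K : Set (Vr r)) : Set (Set (Vr r)) :=
  { H | H ∈ A ∧ spanDim (H ∩ closure K) = r - 1 }

/-- The set `B^K` of inward-pointing normals of the walls of `K`. -/
def BK {r : ℕ} (A : Finset (Set (Vr r))) (R : Finset (Vr r →ₗ[ℝ] ℝ)) (K : Set (Vr r)) :
    Finset (Vr r →ₗ[ℝ] ℝ) :=
  R.filter (fun α => ker0 α ∈ walls A K ∧ K ⊆ {x | 0 ≤ α x})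

/-- A crystallographic arrangement `(A, R)`. -/
structure IsCrystArr {r : ℕ} (A : Finset (Set (Vr r))) (R : Finset (Vr r →ₗ[ℝ] ℝ)) : Prop where
  simplicial : ∀ K ∈ chambers A, IsOpenSimplicialCone K
  hyps : (A : Set (Set (Vr r))) = (fun α => ker0 α) '' (R : Set (Vr r →ₗ[ℝ] ℝ))
  nonzero : ∀ α ∈ R, α ≠ 0
  neg_mem : ∀ α ∈ R, -α ∈ R
  reduced : ∀ α ∈ R, ∀ β ∈ R, (∃ c : ℝ, β = c • α) → β = α ∨ β = -α
  integral : ∀ K ∈ chambers A, ∀ β ∈ R,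
    β ∈ Submodule.span ℤ ((BK A R K : Set (Vr r →ₗ[ℝ] ℝ)))

/-- The set of all intersections of closed chambers of `A`. -/
def closedChamberInts {r : ℕ} (A : Finset (Set (Vr r))) : Set (Set (Vr r)) :=
  { σ | ∃ S : Set (Set (Vr r)), S.Nonempty ∧ S ⊆ chambers A ∧ σ = ⋂₀ (closure '' S) }

/-- The lattice dual to `M_R = ∑_{α ∈ R} ℤ α`. -/
def dualLattice {r : ℕ} (R : Finset (Vr r →ₗ[ℝ] ℝ)) : AddSubgroup (Vr r) where
  carrier := { x | ∀ α ∈ R, ∃ k : ℤ, α x = k }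
  zero_mem' := fun α _ => ⟨0, by simp⟩
  add_mem' := by
    intro x y hx hy α hα
    obtain ⟨k, hk⟩ := hx α hα
    obtain ⟨m, hm⟩ := hy α hα
    exact ⟨k + m, by simp [hk, hm]⟩
  neg_mem' := by
    intro x hx α hα
    obtain ⟨k, hk⟩ := hx α hα
    exact ⟨-k, by simp [hk]⟩

/-- The star fan of `δ`, as a collection of cones in the quotient by `E`. -/
def starAt {r : ℕ} (F : Set (Set (Vr r))) (δ : Set (Vr r)) (E : Submodule ℝ (Vr r)) :
    Set (Set (Vr r ⧸ E)) :=
  { τ | ∃ σ ∈ F, δ ⊆ σ ∧ τ = E.mkQ '' σ }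

/-- The positive roots `R_+^K` at the chamber `K`. -/
def RplusF {r : ℕ} (A : Finset (Set (Vr r))) (R : Finset (Vr r →ₗ[ℝ] ℝ)) (K : Set (Vr r)) :
    Finset (Vr r →ₗ[ℝ] ℝ) :=
  R.filter (fun α => α ∈ coneGen (BK A R K))

/-- `ρ^K`, the half-sum of the positive roots at `K`. -/
def rhoK {r : ℕ} (A : Finset (Set (Vr r))) (R : Finset (Vr r →ₗ[ℝ] ℝ)) (K : Set (Vr r)) :
    Vr r →ₗ[ℝ] ℝ :=
  (1/2 : ℝ) • ∑ α ∈ RplusF A R K, α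

end

/-- The simplicial cone `S^K = ρ^K − cone(B^K)` in the dual space. -/
def SK {r : ℕ} (A : Finset (Set (Vr r))) (R : Finset (Vr r →ₗ[ℝ] ℝ)) (K : Set (Vr r)) :
    Set (Vr r →ₗ[ℝ] ℝ) :=
  { f | ∃ y ∈ coneGen (BK A R K), f = rhoK A R K - y }

/-!
Fix a chamber `K` and a point `x ∈ K`. Every root has constant sign on `K`, and a root that is
nonnegative on the simplicial cone `K` is a nonnegative combination of `B^K`: each facet of `K`
is cut out by a root, since otherwise a generic point of the facet would lie on no hyperplane and
hence in `K` itself. So `R_+^K = {α ∈ R | 0 < α x}`, and the roots in `R_+^K \ R_+^{K'}` are the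
negatives of those in `R_+^{K'} \ R_+^K`. Hence `ρ^{K'} - ρ^K` is the sum of the latter, which
lies in the cone of `B^{K'}`; this gives `ρ^K ∈ S^{K'}`.

On `S^K`, evaluation at `x` is maximised exactly at `ρ^K`, so `ρ^K` is an extreme point of `P`.
Conversely, every point `y` lies in the closure of some chamber `K`, and then every `f ∈ P`
satisfies `f y ≤ ρ^K y`; by separation, `P` is the convex hull of the `ρ^K`.
-/

open Set Filter Topology

section ConeGen

variable {M : Type*} [AddCommGroup M] [Module ℝ M]

theorem coneGen_eq_hull (s : Finset M) : coneGen s = PointedCone.hull ℝ (s : Set M) := by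
  ext x
  constructor
  · rintro ⟨c, hc, rfl⟩
    exact Submodule.sum_mem _ fun v hv =>
      PointedCone.smul_mem _ (hc v) (PointedCone.subset_hull (Finset.mem_coe.2 hv))
  · rw [SetLike.mem_coe, PointedCone.mem_hull_set]
    rintro ⟨c, hcs, hc, rfl⟩
    exact ⟨c, hc, Finsupp.sum_of_support_subset c (Finset.coe_subset.1 hcs) (fun m t => t • m)
      fun _ _ => zero_smul _ _⟩

theorem subset_coneGen (s : Finset M) : (s : Set M) ⊆ coneGen s := by
  rw [coneGen_eq_hull]
  exact PointedCone.subset_hull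

theorem smul_mem_coneGen {s : Finset M} {t : ℝ} {x : M} (ht : 0 ≤ t) (hx : x ∈ coneGen s) :
    t • x ∈ coneGen s := by
  rw [coneGen_eq_hull] at hx ⊢
  exact PointedCone.smul_mem _ ht hx

theorem sum_mem_coneGen {ι : Type*} {s : Finset M} (t : Finset ι) {v : ι → M}
    (hv : ∀ i ∈ t, v i ∈ coneGen s) : ∑ i ∈ t, v i ∈ coneGen s := by
  rw [coneGen_eq_hull] at hv ⊢
  exact Submodule.sum_mem _ hv

theorem convex_coneGen (s : Finset M) : Convex ℝ (coneGen s) := by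
  rw [coneGen_eq_hull]
  exact PointedCone.convex _

variable {V : Type*} [AddCommGroup V] [Module ℝ V] {s : Finset (V →ₗ[ℝ] ℝ)} {x : V}
  {y : V →ₗ[ℝ] ℝ}

theorem apply_nonneg_of_mem_coneGen (hs : ∀ v ∈ s, 0 ≤ v x) (hy : y ∈ coneGen s) : 0 ≤ y x := by
  obtain ⟨c, hc, rfl⟩ := hy
  simp only [LinearMap.sum_apply, LinearMap.smul_apply, smul_eq_mul]
  exact Finset.sum_nonneg fun v hv => mul_nonneg (hc v) (hs v hv)

theorem eq_zero_of_mem_coneGen_of_apply_eq_zero (hs : ∀ v ∈ s, 0 < v x) (hy : y ∈ coneGen s)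
    (hyx : y x = 0) : y = 0 := by
  obtain ⟨c, hc, rfl⟩ := hy
  simp only [LinearMap.sum_apply, LinearMap.smul_apply, smul_eq_mul] at hyx
  have hterm := (Finset.sum_eq_zero_iff_of_nonneg fun v hv => mul_nonneg (hc v) (hs v hv).le).1 hyx
  refine Finset.sum_eq_zero fun v hv => ?_
  rw [(mul_eq_zero.1 (hterm v hv)).resolve_right (hs v hv).ne', zero_smul]

end ConeGen

theorem mem_extremePoints_of_forall_apply_lt {E : Type*} [AddCommGroup E] [Module ℝ E]
    {S : Set E} {x : E} (ℓ : E →ₗ[ℝ] ℝ) (hx : x ∈ S) (h : ∀ y ∈ S, y ≠ x → ℓ y < ℓ x) :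
    x ∈ S.extremePoints ℝ := by
  have hle : ∀ y ∈ S, ℓ y ≤ ℓ x := fun y hy => by
    rcases eq_or_ne y x with rfl | hne
    exacts [le_rfl, (h y hy hne).le]
  refine mem_extremePoints.2 ⟨hx, fun y₁ hy₁ y₂ hy₂ hseg => ?_⟩
  obtain ⟨a, b, ha, hb, hab, rfl⟩ := hseg
  have hℓ : ℓ (a • y₁ + b • y₂) = a * ℓ y₁ + b * ℓ y₂ := by simp
  have hsplit : ℓ (a • y₁ + b • y₂) = a * ℓ (a • y₁ + b • y₂) + b * ℓ (a • y₁ + b • y₂) := by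
    rw [← add_mul, hab, one_mul]
  by_contra hne
  rcases not_and_or.1 hne with h₁ | h₂
  · nlinarith [h y₁ hy₁ h₁, hle y₂ hy₂]
  · nlinarith [h y₂ hy₂ h₂, hle y₁ hy₁]

theorem exists_apply_lt_of_notMem_convexHull {V : Type*} [AddCommGroup V] [Module ℝ V]
    [FiniteDimensional ℝ V] {Q : Set (Module.Dual ℝ V)} (hQ : Q.Finite) {f : Module.Dual ℝ V}
    (hf : f ∉ convexHull ℝ Q) : ∃ x : V, ∀ q ∈ Q, q x < f x := by
  let e := (Module.finBasis ℝ (Module.Dual ℝ V)).equivFun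
  have hfe : e f ∉ convexHull ℝ (e '' Q) := by
    rw [show ⇑e = e.toLinearMap from rfl, ← e.toLinearMap.image_convexHull]
    exact fun ⟨g, hg, hgf⟩ => hf (e.injective hgf ▸ hg)
  obtain ⟨g, u, hQu, huf⟩ := geometric_hahn_banach_closed_point (convex_convexHull ℝ _)
    ((hQ.image e).isClosed_convexHull (𝕜 := ℝ)) hfe
  refine ⟨(Module.evalEquiv ℝ V).symm ((g : _ →ₗ[ℝ] ℝ) ∘ₗ e.toLinearMap), fun q hq => ?_⟩
  simp only [Module.apply_evalEquiv_symm_apply]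
  exact (hQu _ (subset_convexHull ℝ _ ⟨q, hq, rfl⟩)).trans huf

theorem dense_setOf_forall_apply_ne_zero {E : Type*} [NormedAddCommGroup E] [NormedSpace ℝ E]
    [FiniteDimensional ℝ E] (S : Finset (E →ₗ[ℝ] ℝ)) (hS : ∀ α ∈ S, α ≠ 0) :
    Dense {x | ∀ α ∈ S, α x ≠ 0} := by
  have := FiniteDimensional.complete ℝ E
  have hset : {x | ∀ α ∈ S, α x ≠ 0} =
      ⋂ α ∈ (S : Set (E →ₗ[ℝ] ℝ)), (LinearMap.ker α : Set E)ᶜ := by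
    ext; simp
  rw [hset]
  refine dense_biInter_of_isOpen (fun α _ => ?_) S.countable_toSet fun α hα => ?_
  · exact (isClosed_singleton.preimage α.continuous_of_finiteDimensional).isOpen_compl
  · rw [← interior_eq_empty_iff_dense_compl, ← not_nonempty_iff_eq_empty]
    exact fun h => hS α hα (LinearMap.ker_eq_top.1 (Submodule.eq_top_of_nonempty_interior' _ h))

theorem Module.Basis.mem_closure_setOf_coord_pos {ι E : Type*} [Fintype ι] [AddCommGroup E]
    [Module ℝ E] [TopologicalSpace E] [ContinuousAdd E] [ContinuousSMul ℝ E]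
    (B : Module.Basis ι ℝ E) {x : E} (hx : ∀ i, 0 ≤ B.coord i x) :
    x ∈ closure {x | ∀ i, 0 < B.coord i x} := by
  classical
  have htend : Tendsto (fun ε : ℝ => x + ε • ∑ j, B j) (𝓝[>] 0) (𝓝 x) := by
    have : Continuous (fun ε : ℝ => x + ε • ∑ j, B j) := by fun_prop
    simpa using this.continuousWithinAt.tendsto (s := Ioi 0) (x := 0)
  refine mem_closure_of_tendsto htend (eventually_nhdsWithin_of_forall fun ε (hε : 0 < ε) i => ?_)
  simpa [Finsupp.single_apply] using add_pos_of_nonneg_of_pos (hx i) hε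

theorem Module.Basis.self_mem_closure_setOf_coord_pos {ι E : Type*} [Fintype ι] [AddCommGroup E]
    [Module ℝ E] [TopologicalSpace E] [ContinuousAdd E] [ContinuousSMul ℝ E]
    (B : Module.Basis ι ℝ E) (j : ι) : B j ∈ closure {x | ∀ i, 0 < B.coord i x} := by
  classical
  refine B.mem_closure_setOf_coord_pos fun i => ?_
  simp only [Module.Basis.coord_apply, Module.Basis.repr_self, Finsupp.single_apply]
  split_ifs <;> norm_num

theorem apply_nonneg_of_mem_closure {V : Type*} [AddCommGroup V] [Module ℝ V] [TopologicalSpace V]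
    [IsTopologicalAddGroup V] [ContinuousSMul ℝ V] [T2Space V] [FiniteDimensional ℝ V]
    {α : V →ₗ[ℝ] ℝ} {K : Set V} (hK : K ⊆ {x | 0 ≤ α x}) {x : V} (hx : x ∈ closure K) :
    0 ≤ α x :=
  closure_minimal hK (isClosed_le continuous_const α.continuous_of_finiteDimensional) hx

section Arrangement

variable {r : ℕ} {A : Finset (Set (Vr r))} {R : Finset (Vr r →ₗ[ℝ] ℝ)} {K K' : Set (Vr r)}
  {α f : Vr r →ₗ[ℝ] ℝ} {x y : Vr r} {B : Module.Basis (Fin r) ℝ (Vr r)}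

theorem nonempty_of_mem_chambers (hK : K ∈ chambers A) : K.Nonempty := by
  obtain ⟨x, hx, rfl⟩ := hK
  exact ⟨x, mem_connectedComponentIn hx⟩

theorem convex_SK : Convex ℝ (SK A R K) := by
  rintro _ ⟨y, hy, rfl⟩ _ ⟨z, hz, rfl⟩ a b ha hb hab
  refine ⟨a • y + b • z, convex_coneGen _ hy hz ha hb hab, ?_⟩
  linear_combination (norm := module) hab • rhoK A R K

theorem apply_le_rhoK_of_mem_SK (hf : f ∈ SK A R K) (hx : x ∈ closure K) :
    f x ≤ rhoK A R K x := by
  obtain ⟨y, hy, rfl⟩ := hf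
  have := apply_nonneg_of_mem_coneGen
    (fun v hv => apply_nonneg_of_mem_closure (Finset.mem_filter.1 hv).2.2 hx) hy
  simpa using this

theorem finite_setOf_rhoK : {f | ∃ K ∈ chambers A, f = rhoK A R K}.Finite := by
  refine ((R.powerset : Set (Finset _)).toFinite.image
    fun P => (1 / 2 : ℝ) • ∑ α ∈ P, α).subset ?_
  rintro _ ⟨K, -, rfl⟩
  exact ⟨RplusF A R K, Finset.mem_powerset.2 (Finset.filter_subset _ _), rfl⟩

theorem two_smul_rhoK_mem_span (K : Set (Vr r)) :
    (2 : ℝ) • rhoK A R K ∈ Submodule.span ℤ (R : Set (Vr r →ₗ[ℝ] ℝ)) := by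
  rw [rhoK, smul_smul, show (2 : ℝ) * (1 / 2) = 1 by norm_num, one_smul]
  exact Submodule.sum_mem _ fun α hα =>
    Submodule.subset_span (Finset.mem_coe.2 (Finset.filter_subset _ _ hα))

namespace IsCrystArr

theorem compl_sUnion_eq (hcr : IsCrystArr A R) :
    (⋃₀ (A : Set (Set (Vr r))))ᶜ = {x | ∀ α ∈ R, α x ≠ 0} := by
  ext x
  simp [hcr.hyps, ker0]

theorem isOpen_compl_sUnion (hcr : IsCrystArr A R) : IsOpen (⋃₀ (A : Set (Set (Vr r))))ᶜ := by
  have : {x : Vr r | ∀ α ∈ R, α x ≠ 0} = ⋂ α ∈ R, α ⁻¹' {0}ᶜ := by ext; simp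
  rw [hcr.compl_sUnion_eq, this]
  exact isOpen_biInter_finset fun α _ =>
    isOpen_compl_singleton.preimage α.continuous_of_finiteDimensional

theorem isOpen_of_mem_chambers (hcr : IsCrystArr A R) (hK : K ∈ chambers A) : IsOpen K := by
  obtain ⟨x, -, rfl⟩ := hK
  exact hcr.isOpen_compl_sUnion.connectedComponentIn

theorem apply_ne_zero (hcr : IsCrystArr A R) (hK : K ∈ chambers A) (hα : α ∈ R) (hx : x ∈ K) :
    α x ≠ 0 := by
  obtain ⟨z, -, rfl⟩ := hK
  have := connectedComponentIn_subset _ _ hx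
  rw [hcr.compl_sUnion_eq] at this
  exact this α hα

theorem apply_pos_of_apply_pos (hcr : IsCrystArr A R) (hK : K ∈ chambers A) (hα : α ∈ R)
    (hx : x ∈ K) (hy : y ∈ K) (hxα : 0 < α x) : 0 < α y := by
  have hKconn : IsPreconnected K := by
    obtain ⟨z, -, rfl⟩ := hK
    exact isPreconnected_connectedComponentIn
  refine (hcr.apply_ne_zero hK hα hy).lt_or_gt.resolve_left fun hyα => ?_
  obtain ⟨z, hz, hz0⟩ := hKconn.intermediate_value hy hx
    α.continuous_of_finiteDimensional.continuousOn ⟨hyα.le, hxα.le⟩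
  exact hcr.apply_ne_zero hK hα hz hz0

theorem mem_of_mem_closure (hcr : IsCrystArr A R) (hK : K ∈ chambers A) (hx : x ∈ closure K)
    (hxR : ∀ α ∈ R, α x ≠ 0) : x ∈ K := by
  have hxΩ : x ∈ (⋃₀ (A : Set (Set (Vr r))))ᶜ := by rwa [hcr.compl_sUnion_eq]
  have hC := hcr.isOpen_compl_sUnion.connectedComponentIn (x := x)
  obtain ⟨z, hzC, hzK⟩ := mem_closure_iff.1 hx _ hC (mem_connectedComponentIn hxΩ)
  obtain ⟨w, -, rfl⟩ := hK
  rw [connectedComponentIn_eq hzK, ← connectedComponentIn_eq hzC]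
  exact mem_connectedComponentIn hxΩ

theorem exists_basis_chamber_eq (hcr : IsCrystArr A R) (hK : K ∈ chambers A) :
    ∃ B : Module.Basis (Fin r) ℝ (Vr r), K = {x | ∀ i, 0 < B.coord i x} := by
  obtain ⟨b, hb, rfl⟩ := hcr.simplicial K hK
  let B := basisOfLinearIndependentOfCardEqFinrank' b hb (by simp)
  have hB : ⇑B = b := coe_basisOfLinearIndependentOfCardEqFinrank' b hb _
  refine ⟨B, Set.ext fun x => ⟨?_, fun hx => ⟨fun i => B.coord i x, hx, ?_⟩⟩⟩
  · rintro ⟨c, hc, rfl⟩ i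
    rw [← hB, B.coord_apply, B.repr_sum_self]
    exact hc i
  · simp only [← hB, B.coord_apply, B.sum_repr]

theorem smul_coord_mem_BK (hcr : IsCrystArr A R) (hKB : K = {x | ∀ j, 0 < B.coord j x})
    {i : Fin r} {t : ℝ} (ht : 0 < t) (htR : t • B.coord i ∈ R) : t • B.coord i ∈ BK A R K := by
  have hne : t • B.coord i ≠ 0 := fun h => by
    simpa [ht.ne'] using congrArg (fun f : Vr r →ₗ[ℝ] ℝ => f (B i)) h
  have hker := Module.Dual.finrank_ker_add_one_of_ne_zero hne
  rw [Module.finrank_fin_fun] at hker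
  have hle : spanDim (ker0 (t • B.coord i) ∩ closure K) ≤ r - 1 := by
    have hsub : ker0 (t • B.coord i) ∩ closure K ⊆ LinearMap.ker (t • B.coord i) :=
      fun x hx => hx.1
    have := Submodule.finrank_mono (Submodule.span_le.2 hsub)
    unfold spanDim; omega
  have hge : r - 1 ≤ spanDim (ker0 (t • B.coord i) ∩ closure K) := by
    have hind : LinearIndependent ℝ (fun j : {j // j ≠ i} => B j) :=
      B.linearIndependent.comp _ Subtype.val_injective
    have hsub : range (fun j : {j // j ≠ i} => B j) ⊆ ker0 (t • B.coord i) ∩ closure K := by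
      rintro _ ⟨j, rfl⟩
      refine ⟨by simp [ker0, Ne.symm j.2], ?_⟩
      rw [hKB]
      exact B.self_mem_closure_setOf_coord_pos j
    have := Submodule.finrank_mono (Submodule.span_mono (R := ℝ) hsub)
    rwa [finrank_span_eq_card hind, Fintype.card_subtype_compl, Fintype.card_fin,
      Fintype.card_unique] at this
  refine Finset.mem_filter.2 ⟨htR, ⟨?_, le_antisymm hle hge⟩, ?_⟩
  · change ker0 (t • B.coord i) ∈ (A : Set (Set (Vr r)))
    rw [hcr.hyps]
    exact ⟨_, htR, rfl⟩
  · rw [hKB]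
    exact fun x hx => by simpa using (mul_pos ht (hx i)).le

theorem exists_pos_smul_coord_mem (hcr : IsCrystArr A R) (hK : K ∈ chambers A)
    (hKB : K = {x | ∀ j, 0 < B.coord j x}) (i : Fin r) : ∃ t : ℝ, 0 < t ∧ t • B.coord i ∈ R := by
  let π : Vr r →ₗ[ℝ] Vr r := LinearMap.id - (B.coord i).smulRight (B i)
  have hπ : ∀ j x, B.coord j (π x) = if j = i then 0 else B.coord j x := fun j x => by
    by_cases hj : j = i <;> simp [π, hj]
  obtain ⟨α, hαR, hαπ⟩ : ∃ α ∈ R, α ∘ₗ π = 0 := by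
    by_contra! h
    obtain ⟨q, hqK, hq⟩ := (dense_setOf_forall_apply_ne_zero (R.image (· ∘ₗ π))
      (by simpa using h)).inter_open_nonempty K (hcr.isOpen_of_mem_chambers hK)
      (nonempty_of_mem_chambers hK)
    rw [hKB] at hqK
    -- `π q` lies on the facet `B.coord i = 0` of `K` but off every hyperplane, so inside `K`.
    have hπq : π q ∈ K := by
      refine hcr.mem_of_mem_closure hK ?_ fun α hα => hq _ (Finset.mem_image_of_mem _ hα)
      rw [hKB]
      refine B.mem_closure_setOf_coord_pos fun j => ?_
      rw [hπ]
      split_ifs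
      exacts [le_rfl, (hqK j).le]
    rw [hKB] at hπq
    simpa [hπ] using hπq i
  have hα : α = α (B i) • B.coord i := by
    conv_lhs => rw [← B.sum_dual_apply_smul_coord α]
    refine Finset.sum_eq_single i (fun j _ hj => ?_) (by simp)
    have : α (π (B j)) = 0 := by rw [← LinearMap.comp_apply, hαπ, LinearMap.zero_apply]
    simp [π, Ne.symm hj] at this
    rw [this, zero_smul]
  have hne : α (B i) ≠ 0 := fun h => hcr.nonzero α hαR (by rw [hα, h, zero_smul])
  rcases hne.lt_or_gt with hneg | hpos
  · have hnegR := hcr.neg_mem α hαR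
    rw [hα] at hnegR
    exact ⟨_, neg_pos.2 hneg, by convert hnegR using 1; exact neg_smul (α (B i)) (B.coord i)⟩
  · exact ⟨α (B i), hpos, hα ▸ hαR⟩

theorem mem_coneGen_BK_of_nonneg (hcr : IsCrystArr A R) (hK : K ∈ chambers A)
    (hKB : K = {x | ∀ j, 0 < B.coord j x}) (hα : ∀ j, 0 ≤ α (B j)) :
    α ∈ coneGen (BK A R K) := by
  choose t ht htR using hcr.exists_pos_smul_coord_mem hK hKB
  have hsum : α = ∑ j, (α (B j) / t j) • (t j • B.coord j) := by
    conv_lhs => rw [← B.sum_dual_apply_smul_coord α]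
    exact Finset.sum_congr rfl fun j _ => by rw [smul_smul, div_mul_cancel₀ _ (ht j).ne']
  rw [hsum]
  exact sum_mem_coneGen _ fun j _ => smul_mem_coneGen (div_nonneg (hα j) (ht j).le)
    (subset_coneGen _ (hcr.smul_coord_mem_BK hKB (ht j) (htR j)))

theorem neg_mem_iff (hcr : IsCrystArr A R) : -α ∈ R ↔ α ∈ R :=
  ⟨fun h => neg_neg α ▸ hcr.neg_mem _ h, hcr.neg_mem α⟩

theorem apply_pos_of_mem_BK (hcr : IsCrystArr A R) (hK : K ∈ chambers A) (hα : α ∈ BK A R K)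
    (hx : x ∈ K) : 0 < α x :=
  ((Finset.mem_filter.1 hα).2.2 hx).lt_of_ne'
    (hcr.apply_ne_zero hK (Finset.mem_filter.1 hα).1 hx)

theorem mem_RplusF_iff (hcr : IsCrystArr A R) (hK : K ∈ chambers A) (hx : x ∈ K) :
    α ∈ RplusF A R K ↔ α ∈ R ∧ 0 < α x := by
  rw [RplusF, Finset.mem_filter]
  refine and_congr_right fun hαR => ⟨fun hα => ?_, fun hα => ?_⟩
  · exact (apply_nonneg_of_mem_coneGen (fun v hv => (Finset.mem_filter.1 hv).2.2 hx) hα).lt_of_ne'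
      (hcr.apply_ne_zero hK hαR hx)
  · obtain ⟨B, hKB⟩ := hcr.exists_basis_chamber_eq hK
    have hαK : K ⊆ {y | 0 ≤ α y} := fun y hy =>
      (hcr.apply_pos_of_apply_pos hK hαR hx hy hα).le
    exact hcr.mem_coneGen_BK_of_nonneg hK hKB fun j =>
      apply_nonneg_of_mem_closure hαK (hKB ▸ B.self_mem_closure_setOf_coord_pos j)

theorem rhoK_sub_rhoK (hcr : IsCrystArr A R) (hK : K ∈ chambers A) (hK' : K' ∈ chambers A) :
    rhoK A R K' - rhoK A R K = ∑ α ∈ RplusF A R K' \ RplusF A R K, α := by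
  obtain ⟨x, hx⟩ := nonempty_of_mem_chambers hK
  obtain ⟨x', hx'⟩ := nonempty_of_mem_chambers hK'
  set P := RplusF A R K
  set P' := RplusF A R K'
  have hneg : P \ P' = (P' \ P).map (Equiv.neg _).toEmbedding := by
    ext α
    simp only [Finset.mem_map_equiv, Finset.mem_sdiff, P, P', hcr.mem_RplusF_iff hK hx,
      hcr.mem_RplusF_iff hK' hx', Equiv.neg_symm, Equiv.neg_apply, hcr.neg_mem_iff,
      LinearMap.neg_apply, neg_pos]
    by_cases hαR : α ∈ R
    · have h := hcr.apply_ne_zero hK hαR hx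
      have h' := hcr.apply_ne_zero hK' hαR hx'
      simp only [hαR, true_and, not_lt]
      exact ⟨fun ⟨h₁, h₂⟩ => ⟨h₂.lt_of_ne h', h₁.le⟩, fun ⟨h₁, h₂⟩ => ⟨h₂.lt_of_ne' h, h₁.le⟩⟩
    · simp [hαR]
  have hsum : ∑ α ∈ P', α - ∑ α ∈ P, α = (2 : ℝ) • ∑ α ∈ P' \ P, α := by
    rw [← Finset.sum_inter_add_sum_sdiff P' P, ← Finset.sum_inter_add_sum_sdiff P P', hneg,
      Finset.sum_map, Finset.inter_comm, two_smul]
    simp only [Equiv.coe_toEmbedding, Equiv.neg_apply]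
    rw [Finset.sum_neg_distrib]
    abel
  have hρ : rhoK A R K' - rhoK A R K = (1 / 2 : ℝ) • (∑ α ∈ P', α - ∑ α ∈ P, α) := by
    unfold rhoK
    rw [smul_sub]
  rw [hρ, hsum, smul_smul]
  norm_num

theorem rhoK_mem_SK (hcr : IsCrystArr A R) (hK : K ∈ chambers A) (hK' : K' ∈ chambers A) :
    rhoK A R K ∈ SK A R K' :=
  ⟨∑ α ∈ RplusF A R K' \ RplusF A R K, α,
    sum_mem_coneGen _ fun _ hα => (Finset.mem_filter.1 (Finset.mem_sdiff.1 hα).1).2,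
    by rw [← hcr.rhoK_sub_rhoK hK hK', sub_sub_cancel]⟩

theorem apply_lt_rhoK_of_mem_SK (hcr : IsCrystArr A R) (hK : K ∈ chambers A) (hx : x ∈ K)
    (hf : f ∈ SK A R K) (hne : f ≠ rhoK A R K) : f x < rhoK A R K x := by
  obtain ⟨y, hy, rfl⟩ := hf
  have hpos : ∀ v ∈ BK A R K, 0 < v x := fun v hv => hcr.apply_pos_of_mem_BK hK hv hx
  have hyx : y x ≠ 0 := fun h => hne (by
    rw [eq_zero_of_mem_coneGen_of_apply_eq_zero hpos hy h, sub_zero])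
  have := (apply_nonneg_of_mem_coneGen (fun v hv => (hpos v hv).le) hy).lt_of_ne' hyx
  simpa using this

theorem rhoK_mem_extremePoints (hcr : IsCrystArr A R) (hK : K ∈ chambers A) :
    rhoK A R K ∈ (⋂ K ∈ chambers A, SK A R K).extremePoints ℝ := by
  obtain ⟨x, hx⟩ := nonempty_of_mem_chambers hK
  refine mem_extremePoints_of_forall_apply_lt (Module.Dual.eval ℝ _ x)
    (mem_iInter₂.2 fun K' hK' => hcr.rhoK_mem_SK hK hK') fun f hf hne => ?_
  exact hcr.apply_lt_rhoK_of_mem_SK hK hx (mem_iInter₂.1 hf K hK) hne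

theorem exists_mem_closure_chamber (hcr : IsCrystArr A R) (x : Vr r) :
    ∃ K ∈ chambers A, x ∈ closure K := by
  obtain ⟨y, hy⟩ := (dense_setOf_forall_apply_ne_zero R hcr.nonzero).nonempty
  have hcont : Continuous fun t : ℝ => x + t • y := by fun_prop
  -- For small `t > 0`, `x + t • y` avoids the hyperplanes through `x` because `y` is generic,
  -- and the others by continuity.
  have hev : ∀ᶠ t in 𝓝[>] (0 : ℝ), x + t • y ∈ (⋃₀ (A : Set (Set (Vr r))))ᶜ := by
    simp only [hcr.compl_sUnion_eq, mem_ofPred_eq]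
    refine (Filter.eventually_all_finset R).2 fun α hα => ?_
    by_cases hαx : α x = 0
    · filter_upwards [self_mem_nhdsWithin] with t (ht : 0 < t)
      simpa [hαx, ht.ne'] using hy α hα
    · refine nhdsWithin_le_nhds ((α.continuous_of_finiteDimensional.comp hcont).continuousAt
        (x := 0) |>.eventually_ne ?_)
      simpa using hαx
  obtain ⟨ε, hε, hsub⟩ := mem_nhdsGT_iff_exists_Ioo_subset.1 hev
  have hmid : ε / 2 ∈ Ioo 0 ε := ⟨half_pos hε, half_lt_self hε⟩
  have htend : Tendsto (fun t : ℝ => x + t • y) (𝓝[>] 0) (𝓝 x) := by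
    simpa using hcont.continuousWithinAt.tendsto (s := Ioi 0) (x := 0)
  refine ⟨_, ⟨_, hsub hmid, rfl⟩, mem_closure_of_tendsto htend ?_⟩
  filter_upwards [Ioo_mem_nhdsGT hε] with t ht
  exact (isPreconnected_Ioo.image _ hcont.continuousOn).subset_connectedComponentIn
      ⟨_, hmid, rfl⟩ (image_subset_iff.2 hsub) ⟨t, ht, rfl⟩

theorem iInter_SK_eq_convexHull (hcr : IsCrystArr A R) :
    ⋂ K ∈ chambers A, SK A R K = convexHull ℝ {f | ∃ K ∈ chambers A, f = rhoK A R K} := by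
  refine Subset.antisymm (fun f hf => ?_) (convexHull_min ?_ ?_)
  · by_contra hfQ
    obtain ⟨x, hx⟩ := exists_apply_lt_of_notMem_convexHull finite_setOf_rhoK hfQ
    obtain ⟨K, hK, hxK⟩ := hcr.exists_mem_closure_chamber x
    exact (apply_le_rhoK_of_mem_SK (mem_iInter₂.1 hf K hK) hxK).not_gt (hx _ ⟨K, hK, rfl⟩)
  · rintro _ ⟨K, hK, rfl⟩
    exact mem_iInter₂.2 fun K' hK' => hcr.rhoK_mem_SK hK hK'
  · exact convex_iInter₂ fun _ _ => convex_SK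

end IsCrystArr

end Arrangement

/-- `ρ^K ∈ S^{K'}` for all chambers `K, K'`; the points `ρ^K` are
exactly the vertices of the convex polytope `P = ⋂_K S^K`, which is integral
in `(1/2)M`. -/
theorem stmt11 {r : ℕ} (A : Finset (Set (Vr r))) (R : Finset (Vr r →ₗ[ℝ] ℝ))
    (hcr : IsCrystArr A R) :
    (∀ K ∈ chambers A, ∀ K' ∈ chambers A, rhoK A R K ∈ SK A R K') ∧
    { f | ∃ K ∈ chambers A, f = rhoK A R K } =
      Set.extremePoints ℝ (⋂ K ∈ chambers A, SK A R K) ∧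
    (⋂ K ∈ chambers A, SK A R K) =
      convexHull ℝ { f | ∃ K ∈ chambers A, f = rhoK A R K } ∧
    ∀ K ∈ chambers A, (2 : ℝ) • rhoK A R K ∈
      Submodule.span ℤ (R : Set (Vr r →ₗ[ℝ] ℝ)) := by
  have hP := hcr.iInter_SK_eq_convexHull
  refine ⟨fun K hK K' hK' => hcr.rhoK_mem_SK hK hK', Subset.antisymm ?_ ?_, hP,
    fun K _ => two_smul_rhoK_mem_span K⟩
  · rintro _ ⟨K, hK, rfl⟩
    exact hcr.rhoK_mem_extremePoints hK
  · rw [hP]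
    exact extremePoints_convexHull_subset
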